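/- arXiv:1609.08937 — 9 statements merged into one kernel-verified Lean document; each statement's English description precedes it below -/
import Mathlib

section
/- For all complex-valued multiplicative characters A, B, B', C, C' of a finite field F_q with q elements and all x, y ∈ F_q, one has F₂(A;B,B';C,C';x,y) = (1/(q-1)²)·Σ_{χ,λ} {Aχ choose χ}·{Aχλ choose λ}·{Bχ choose Cχ}·{B'λ choose C'λ}·χ(x)·λ(y) + Ā(-x)·C̄'(y)·(B̄'C')(1-y)·{ĀB choose BC̄}, where both sums run over all multiplicative characters of F_q. -/
open Finset

noncomputable instance {F : Type*} [Field F] [Fintype F] : Fintype (MulChar F ℂ) :=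
  Fintype.ofFinite _

/-- Finite-field binomial coefficient `{A choose B} = B(-1) · J(A, B̄)`,
where `J(χ,λ) = ∑_u χ(u)·λ(1-u)` is the Jacobi sum. -/
noncomputable def binom {F : Type*} [Field F] [Fintype F] (A B : MulChar F ℂ) : ℂ :=
  B (-1) * ∑ u : F, A u * B⁻¹ (1 - u)

/-- Finite-field Gauss hypergeometric series
`₂F₁(A,B;C|x) = ε(x)·(BC)(-1)·∑_y B(y)·(B̄C)(1-y)·Ā(1-xy)`. -/
noncomputable def gauss2F1 {F : Type*} [Field F] [Fintype F]
    (A B C : MulChar F ℂ) (x : F) : ℂ :=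
  (1 : MulChar F ℂ) x * (B * C) (-1) *
    ∑ y : F, B y * (B⁻¹ * C) (1 - y) * A⁻¹ (1 - x * y)

/-- Finite-field `₃F₂` hypergeometric series. -/
noncomputable def hyper3F2 {F : Type*} [Field F] [Fintype F]
    (A₀ A₁ A₂ B₁ B₂ : MulChar F ℂ) (x : F) : ℂ :=
  ((Fintype.card F : ℂ) - 1)⁻¹ *
    ∑ χ : MulChar F ℂ,
      binom (A₀ * χ) χ * binom (A₁ * χ) (B₁ * χ) * binom (A₂ * χ) (B₂ * χ) * χ x

/-- Finite-field Appell series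
`F₂(A;B,B';C,C';x,y) = ε(xy)·(BB'CC')(-1)·∑_{u,v} B(u)B'(v)(B̄C)(1-u)(B̄'C')(1-v)·Ā(1-ux-vy)`. -/
noncomputable def appellF2 {F : Type*} [Field F] [Fintype F]
    (A B B' C C' : MulChar F ℂ) (x y : F) : ℂ :=
  (1 : MulChar F ℂ) (x * y) * (B * B' * C * C') (-1) *
    ∑ u : F, ∑ v : F,
      B u * B' v * (B⁻¹ * C) (1 - u) * (B'⁻¹ * C') (1 - v) * A⁻¹ (1 - u * x - v * y)

open scoped Classical in
/-- `δ(x) = 1` if `x = 0`, and `0` otherwise. -/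
noncomputable def deltaF {F : Type*} [Field F] (x : F) : ℂ :=
  if x = 0 then 1 else 0

open scoped Classical in
/-- `δ(χ) = 1` if `χ = ε` (the trivial character), and `0` otherwise. -/
noncomputable def deltaChar {F : Type*} [Field F] [Fintype F] (χ : MulChar F ℂ) : ℂ :=
  if χ = 1 then 1 else 0

/-!
For `s, t ≠ 0` expand `Ā(1 - s - t)` in pairs of multiplicative characters,
`Ā(1 - s - t) = (q-1)⁻² ∑_{χ,λ} c(χ,λ) χ(s) λ(t)`, where the coefficient `c(χ,λ)` is an iterated
Jacobi sum: the inner sum `∑_a χ̄(a) Ā(1 - b - a)` is `(Āχ̄)(1-b) {Aχ choose χ}` by rescaling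
`a`, except at `b = 1`, where it degenerates to `A(-1) (q-1) δ(χ = Ā)`. Hence
`c(χ,λ) = {Aχ choose χ}{Aχλ choose λ} + A(-1)(q-1) δ(χ = Ā)`.
Substituting `s = ux`, `t = vy` in `F₂` (the terms with `u = 0` or `v = 0` vanish) separates the
`u`- and `v`-sums into `{Bχ choose Cχ}` and `{B'λ choose C'λ}`, up to signs that cancel. The
`δ` part fixes `χ = Ā`, and the remaining `λ`-sum is Mellin inversion of
`w ↦ C̄'(w) (B̄'C')(1 - w)` at `y`.
-/

namespace FiniteFieldHypergeometric

variable {F : Type*} [Field F]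

lemma apply_neg_one_sq {R : Type*} [CommMonoidWithZero R] (χ : MulChar F R) :
    χ (-1) ^ 2 = 1 := by
  rw [← map_pow, neg_one_sq, map_one]

lemma inv_apply_neg_one {R : Type*} [CommMonoidWithZero R] (χ : MulChar F R) :
    χ⁻¹ (-1) = χ (-1) := by
  rw [MulChar.inv_apply', inv_neg, inv_one]

variable [Fintype F]

instance : HasEnoughRootsOfUnity ℂ (Monoid.exponent Fˣ) :=
  haveI : NeZero (Monoid.exponent Fˣ) := ⟨Monoid.exponent_ne_zero_of_finite⟩
  inferInstance

lemma card_mulChar : (Fintype.card (MulChar F ℂ) : ℂ) = Fintype.card F - 1 := by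
  classical
  rw [← Nat.card_eq_fintype_card, MulChar.card_eq_card_units_of_hasEnoughRootsOfUnity,
    Nat.card_eq_fintype_card, Fintype.card_units, Nat.cast_sub Fintype.card_pos, Nat.cast_one]

lemma card_sub_one_ne_zero : (Fintype.card F : ℂ) - 1 ≠ 0 := by
  rw [sub_ne_zero]
  exact_mod_cast Fintype.one_lt_card.ne'

lemma sum_apply_eq_ite {R : Type*} [CommRing R] [IsDomain R] [DecidableEq F]
    [DecidableEq (MulChar F R)] (ψ : MulChar F R) :
    ∑ a, ψ a = if ψ = 1 then (Fintype.card F : R) - 1 else 0 := by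
  split_ifs with hψ
  · rw [hψ, MulChar.sum_one_eq_card_units, Fintype.card_units, Nat.cast_sub Fintype.card_pos,
      Nat.cast_one]
  · exact MulChar.sum_eq_zero_of_ne_one hψ

lemma sum_mulChar_apply_eq_ite [DecidableEq F] (a : F) :
    ∑ χ : MulChar F ℂ, χ a = if a = 1 then (Fintype.card F : ℂ) - 1 else 0 := by
  split_ifs with ha
  · simp [ha, card_mulChar]
  · obtain ⟨χ, hχ⟩ := MulChar.exists_apply_ne_one_of_hasEnoughRootsOfUnity F ℂ ha
    refine eq_zero_of_mul_eq_self_left hχ ?_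
    simp only [Finset.mul_sum, ← MulChar.mul_apply]
    exact Fintype.sum_bijective _ (Group.mulLeft_bijective χ) _ _ fun _ ↦ rfl

lemma sum_mulChar_inv_apply_mul_apply [DecidableEq F] {s : F} (hs : s ≠ 0) (a : F) :
    ∑ χ : MulChar F ℂ, χ⁻¹ a * χ s = if a = s then (Fintype.card F : ℂ) - 1 else 0 := by
  rcases eq_or_ne a 0 with rfl | ha
  · simp [hs.symm, MulChar.map_zero]
  · simp only [MulChar.inv_apply', ← map_mul, sum_mulChar_apply_eq_ite, inv_mul_eq_one₀ ha]

/-- The multiplicative Fourier transform of `f` on `Fˣ`; the value `f 0` does not enter. -/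
noncomputable def mulTransform (f : F → ℂ) (χ : MulChar F ℂ) : ℂ := ∑ a, f a * χ⁻¹ a

noncomputable def mulTransform₂ (Φ : F → F → ℂ) (χ lam : MulChar F ℂ) : ℂ :=
  mulTransform (fun b ↦ mulTransform (Φ · b) χ) lam

theorem mulTransform_inversion {s : F} (hs : s ≠ 0) (f : F → ℂ) :
    ((Fintype.card F : ℂ) - 1)⁻¹ * ∑ χ, mulTransform f χ * χ s = f s := by
  classical
  simp only [mulTransform, Finset.sum_mul, mul_assoc]
  rw [Finset.sum_comm]
  simp only [← Finset.mul_sum, sum_mulChar_inv_apply_mul_apply hs, mul_ite, mul_zero,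
    Finset.sum_ite_eq', Finset.mem_univ, if_true]
  field_simp [card_sub_one_ne_zero]

theorem mulTransform₂_inversion {s t : F} (hs : s ≠ 0) (ht : t ≠ 0) (Φ : F → F → ℂ) :
    ((Fintype.card F : ℂ) - 1)⁻¹ ^ 2 *
      ∑ χ, ∑ lam, mulTransform₂ Φ χ lam * χ s * lam t = Φ s t := by
  have hinner (χ : MulChar F ℂ) : mulTransform (Φ · t) χ =
      ((Fintype.card F : ℂ) - 1)⁻¹ * ∑ lam, mulTransform₂ Φ χ lam * lam t :=
    (mulTransform_inversion ht (fun b ↦ mulTransform (Φ · b) χ)).symm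
  calc _ = ((Fintype.card F : ℂ) - 1)⁻¹ * ∑ χ, (((Fintype.card F : ℂ) - 1)⁻¹ *
        ∑ lam, mulTransform₂ Φ χ lam * lam t) * χ s := by
        simp only [Finset.mul_sum, Finset.sum_mul]
        exact Finset.sum_congr rfl fun _ _ ↦ Finset.sum_congr rfl fun _ _ ↦ by ring
    _ = Φ s t := by simp only [← hinner, mulTransform_inversion hs]

theorem sum_sum_sum_sum_comm {α β γ δ M : Type*} [Fintype α] [Fintype β] [Fintype γ]
    [Fintype δ] [AddCommMonoid M] (f : α → β → γ → δ → M) :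
    ∑ a, ∑ b, ∑ c, ∑ d, f a b c d = ∑ c, ∑ d, ∑ a, ∑ b, f a b c d :=
  ((Finset.sum_congr rfl fun _ _ ↦ Finset.sum_comm.trans
    (Finset.sum_congr rfl fun _ _ ↦ Finset.sum_comm)).trans Finset.sum_comm).trans
    (Finset.sum_congr rfl fun _ _ ↦ Finset.sum_comm)

theorem sum_sum_eq_sum_sum_mulTransform₂ {g h : F → ℂ} (hg : g 0 = 0) (hh : h 0 = 0) {x y : F}
    (hx : x ≠ 0) (hy : y ≠ 0) (Φ : F → F → ℂ) :
    ∑ u, ∑ v, g u * h v * Φ (u * x) (v * y) =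
      ((Fintype.card F : ℂ) - 1)⁻¹ ^ 2 * ∑ χ, ∑ lam, mulTransform₂ Φ χ lam *
        (∑ u, g u * χ u) * (∑ v, h v * lam v) * χ x * lam y := by
  have hpoint (u v : F) : g u * h v * Φ (u * x) (v * y) =
      ((Fintype.card F : ℂ) - 1)⁻¹ ^ 2 * ∑ χ, ∑ lam,
        mulTransform₂ Φ χ lam * (g u * χ u) * (h v * lam v) * χ x * lam y := by
    rcases eq_or_ne u 0 with rfl | hu
    · simp [hg, MulChar.map_zero]
    rcases eq_or_ne v 0 with rfl | hv
    · simp [hh, MulChar.map_zero]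
    rw [← mulTransform₂_inversion (mul_ne_zero hu hx) (mul_ne_zero hv hy) Φ]
    simp only [Finset.mul_sum, map_mul]
    exact Finset.sum_congr rfl fun _ _ ↦ Finset.sum_congr rfl fun _ _ ↦ by ring
  simp only [hpoint, ← Finset.mul_sum]
  congr 1
  simp only [Finset.mul_sum, Finset.sum_mul]
  conv_lhs => rw [Finset.sum_comm]
  exact sum_sum_sum_sum_comm _

theorem jacobiSum_eq_apply_neg_one_mul_jacobiSum_inv {R : Type*} [CommRing R]
    (α β : MulChar F R) : jacobiSum α β = β (-1) * jacobiSum (α * β)⁻¹ β := by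
  rw [jacobiSum, jacobiSum, Finset.mul_sum]
  refine Fintype.sum_equiv (Equiv.inv F) _ _ fun u ↦ ?_
  rcases eq_or_ne u 0 with rfl | hu
  · simp [MulChar.map_zero]
  have hβu : β u * β u⁻¹ = 1 := by rw [← map_mul, mul_inv_cancel₀ hu, map_one]
  rw [Equiv.inv_apply, MulChar.inv_apply', inv_inv, MulChar.mul_apply,
    show 1 - u⁻¹ = -1 * ((1 - u) * u⁻¹) by field_simp; ring, map_mul, map_mul]
  linear_combination (-(α u * β (1 - u))) * hβu -
    α u * β u * β (1 - u) * β u⁻¹ * apply_neg_one_sq β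

theorem binom_eq_jacobiSum (A B : MulChar F ℂ) : binom A B = jacobiSum (A⁻¹ * B) B⁻¹ := by
  rw [binom, ← jacobiSum, jacobiSum_eq_apply_neg_one_mul_jacobiSum_inv, mul_inv, inv_inv,
    ← mul_assoc, inv_apply_neg_one, ← sq, apply_neg_one_sq, one_mul]

theorem binom_mul_self (A χ : MulChar F ℂ) : binom (A * χ) χ = jacobiSum χ⁻¹ A⁻¹ := by
  rw [binom_eq_jacobiSum, mul_inv, inv_mul_cancel_right, jacobiSum_comm]

theorem jacobiSum_mul_inv_mul (B C χ : MulChar F ℂ) :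
    jacobiSum (B * χ) (B⁻¹ * C) = (B⁻¹ * C) (-1) * binom (B * χ) (C * χ) := by
  rw [jacobiSum_eq_apply_neg_one_mul_jacobiSum_inv, binom_eq_jacobiSum, jacobiSum_comm]
  congr 2 <;> simp [mul_assoc, mul_comm, mul_left_comm]

theorem binom_mul_inv_mul_inv (A B C : MulChar F ℂ) :
    binom (B * A⁻¹) (C * A⁻¹) = binom (A⁻¹ * B) (B * C⁻¹) := by
  rw [binom_eq_jacobiSum, binom_eq_jacobiSum, jacobiSum_comm]
  congr 1
  · simp [mul_assoc, mul_comm, mul_left_comm]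
  · simp only [← div_eq_mul_inv, inv_div, div_mul_div_cancel']

theorem binom_mul_mul_eq_mulTransform (B C lam : MulChar F ℂ) :
    binom (B * lam) (C * lam) = mulTransform (fun w ↦ C⁻¹ w * (B⁻¹ * C) (1 - w)) lam := by
  rw [binom_eq_jacobiSum, jacobiSum_comm, jacobiSum, mulTransform,
    show (B * lam)⁻¹ * (C * lam) = B⁻¹ * C by simp [mul_assoc, mul_comm]]
  refine Finset.sum_congr rfl fun w _ ↦ ?_
  rw [mul_inv, MulChar.mul_apply]
  ring

theorem sum_apply_mul_apply_sub {R : Type*} [CommRing R] [DecidableEq F]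
    (α β : MulChar F R) (w : F) :
    ∑ a, α a * β (w - a) =
      (α * β) w * jacobiSum α β + if w = 0 then β (-1) * ∑ a, (α * β) a else 0 := by
  rcases eq_or_ne w 0 with rfl | hw
  · simp only [MulChar.map_zero, zero_mul, zero_add, if_true, Finset.mul_sum]
    refine Finset.sum_congr rfl fun a _ ↦ ?_
    rw [zero_sub, neg_eq_neg_one_mul, map_mul, MulChar.mul_apply]
    ring
  rw [if_neg hw, add_zero, jacobiSum, Finset.mul_sum]
  refine (Fintype.sum_equiv (Equiv.mulLeft₀ w hw) _ _ fun a ↦ ?_).symm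
  simp only [Equiv.mulLeft₀_apply]
  rw [← mul_one_sub, map_mul, map_mul, MulChar.mul_apply]
  ring

theorem mulTransform₂_one_sub_sub [DecidableEq (MulChar F ℂ)] (A χ lam : MulChar F ℂ) :
    mulTransform₂ (fun s t ↦ A⁻¹ (1 - s - t)) χ lam =
      binom (A * χ) χ * binom (A * χ * lam) lam +
        if χ = A⁻¹ then A (-1) * ((Fintype.card F : ℂ) - 1) else 0 := by
  classical
  have hinner (b : F) : mulTransform (fun s ↦ A⁻¹ (1 - s - b)) χ =
      (A * χ)⁻¹ (1 - b) * binom (A * χ) χ +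
        if b = 1 then (if χ = A⁻¹ then A (-1) * ((Fintype.card F : ℂ) - 1) else 0) else 0 := by
    calc mulTransform (fun s ↦ A⁻¹ (1 - s - b)) χ = ∑ a, χ⁻¹ a * A⁻¹ (1 - b - a) :=
          Finset.sum_congr rfl fun a _ ↦ by rw [sub_right_comm, mul_comm]
      _ = _ := by
          have hchar : χ⁻¹ * A⁻¹ = (A * χ)⁻¹ := by rw [mul_inv, mul_comm]
          rw [sum_apply_mul_apply_sub, sum_apply_eq_ite, binom_mul_self, hchar, inv_apply_neg_one]
          simp only [inv_eq_one, mul_eq_one_iff_eq_inv', sub_eq_zero, eq_comm (a := (1 : F))]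
          split_ifs <;> ring
  rw [mulTransform₂, mulTransform]
  simp only [hinner, add_mul, Finset.sum_add_distrib, ite_mul,
    zero_mul, Finset.sum_ite_eq', Finset.mem_univ, if_true, MulChar.map_one, mul_one]
  rw [binom_mul_self (A * χ) lam, jacobiSum, Finset.mul_sum]
  congr 1
  exact Finset.sum_congr rfl fun b _ ↦ by ring

theorem sum_binom_mul_apply {y : F} (hy : y ≠ 0) (B C : MulChar F ℂ) :
    ∑ lam, binom (B * lam) (C * lam) * lam y =
      ((Fintype.card F : ℂ) - 1) * (C⁻¹ y * (B⁻¹ * C) (1 - y)) := by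
  have h := mulTransform_inversion hy (fun w ↦ C⁻¹ w * (B⁻¹ * C) (1 - w))
  simp only [← binom_mul_mul_eq_mulTransform] at h
  rw [← h, mul_inv_cancel_left₀ card_sub_one_ne_zero]

theorem appellF2_eq_sum_mulTransform₂ {x y : F} (hx : x ≠ 0) (hy : y ≠ 0)
    (A B B' C C' : MulChar F ℂ) :
    appellF2 A B B' C C' x y = ((Fintype.card F : ℂ) - 1)⁻¹ ^ 2 *
      ∑ χ, ∑ lam, mulTransform₂ (fun s t ↦ A⁻¹ (1 - s - t)) χ lam *
        binom (B * χ) (C * χ) * binom (B' * lam) (C' * lam) * χ x * lam y := by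
  have hjacobi (β γ χ : MulChar F ℂ) :
      ∑ u, β u * (β⁻¹ * γ) (1 - u) * χ u = (β⁻¹ * γ) (-1) * binom (β * χ) (γ * χ) := by
    rw [← jacobiSum_mul_inv_mul, jacobiSum]
    exact Finset.sum_congr rfl fun u _ ↦ by rw [MulChar.mul_apply β χ]; ring
  have hsign : (B * B' * C * C') (-1) * ((B⁻¹ * C) (-1) * (B'⁻¹ * C') (-1)) = 1 := by
    simp only [MulChar.mul_apply, inv_apply_neg_one]
    ring_nf
    simp only [apply_neg_one_sq, one_mul]
  rw [appellF2, MulChar.one_apply (isUnit_iff_ne_zero.mpr (mul_ne_zero hx hy)), one_mul]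
  have hsummand (u v : F) :
      B u * B' v * (B⁻¹ * C) (1 - u) * (B'⁻¹ * C') (1 - v) * A⁻¹ (1 - u * x - v * y) =
        B u * (B⁻¹ * C) (1 - u) * (B' v * (B'⁻¹ * C') (1 - v)) * A⁻¹ (1 - u * x - v * y) := by
    ring
  simp only [hsummand]
  rw [sum_sum_eq_sum_sum_mulTransform₂ (g := fun u ↦ B u * (B⁻¹ * C) (1 - u))
    (h := fun v ↦ B' v * (B'⁻¹ * C') (1 - v)) (by simp [MulChar.map_zero])
    (by simp [MulChar.map_zero]) hx hy (fun s t ↦ A⁻¹ (1 - s - t))]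
  simp only [hjacobi]
  rw [mul_left_comm, Finset.mul_sum]
  refine congrArg _ (Finset.sum_congr rfl fun χ _ ↦ ?_)
  rw [Finset.mul_sum]
  refine Finset.sum_congr rfl fun lam _ ↦ ?_
  linear_combination (mulTransform₂ (fun s t ↦ A⁻¹ (1 - s - t)) χ lam *
    binom (B * χ) (C * χ) * binom (B' * lam) (C' * lam) * χ x * lam y) * hsign

end FiniteFieldHypergeometric

open FiniteFieldHypergeometric

/-- alternative double-sum representation of the finite-field Appell series F₂. -/
theorem appellF2_eq_double_sum {F : Type*} [Field F] [Fintype F]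
    (A B B' C C' : MulChar F ℂ) (x y : F) :
    appellF2 A B B' C C' x y =
      ((Fintype.card F : ℂ) - 1)⁻¹ ^ 2 *
        (∑ χ : MulChar F ℂ, ∑ lam : MulChar F ℂ,
          binom (A * χ) χ * binom (A * χ * lam) lam * binom (B * χ) (C * χ) *
            binom (B' * lam) (C' * lam) * χ x * lam y) +
      A⁻¹ (-x) * C'⁻¹ y * (B'⁻¹ * C') (1 - y) * binom (A⁻¹ * B) (B * C⁻¹) := by
  classical
  rcases eq_or_ne x 0 with rfl | hx
  · simp [appellF2, MulChar.map_zero]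
  rcases eq_or_ne y 0 with rfl | hy
  · simp [appellF2, MulChar.map_zero]
  rw [appellF2_eq_sum_mulTransform₂ hx hy]
  simp only [mulTransform₂_one_sub_sub, add_mul, Finset.sum_add_distrib, mul_add]
  congr 1
  rw [Finset.sum_comm]
  simp only [ite_mul, zero_mul, Finset.sum_ite_eq', Finset.mem_univ, if_true]
  simp only [mul_assoc, mul_left_comm _ (A⁻¹ x), ← Finset.mul_sum, sum_binom_mul_apply hy,
    binom_mul_inv_mul_inv]
  rw [neg_eq_neg_one_mul x, map_mul, inv_apply_neg_one]
  field_simp [card_sub_one_ne_zero]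
end

section
/- For all complex-valued multiplicative characters A, B, B', C, C' of a finite field F_q with q elements and all x ∈ F_q, one has F₂(A;B,B';C,C';x,1) = (B'C')(-1)·₃F₂(A, B, AC̄'; C, AB'C̄' | x). -/
open Finset

/-!
Writing `{Bχ choose Cχ}` and `{AC̄'χ choose AB'C̄'χ}` as Jacobi sums and twisting them by
`u ↦ u / (u - 1)` turns them into `(BC)(-1) ∑_u (Bχ)(u) (B̄C)(1 - u)` and
`∑_v B'(v) (ĀB̄'C'χ̄)(1 - v)`, so that `χ` enters the `₃F₂` only through `χ(ux / (1 - v))`.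
The sum over `χ` then collapses by the finite-field binomial theorem
`∑_χ {Aχ choose χ} χ(z) = (q - 1) (Ā(1 - z) - δ(z))`, and
`Ā(1 - v) Ā(1 - ux / (1 - v)) = Ā(1 - ux - v)` leaves the integrand of `F₂(…; x, 1)`.
-/

namespace MulChar

theorem sum_apply_eq_ite {M R : Type*} [CommMonoid M] [Finite M] [CommRing R] [IsDomain R]
    [HasEnoughRootsOfUnity R (Monoid.exponent Mˣ)] [Fintype (MulChar M R)] [DecidableEq M]
    (a : M) : ∑ χ : MulChar M R, χ a = if a = 1 then (Nat.card Mˣ : R) else 0 := by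
  split_ifs with ha
  · simp [ha, Finset.card_univ, ← Nat.card_eq_fintype_card,
      card_eq_card_units_of_hasEnoughRootsOfUnity]
  · obtain ⟨ψ, hψ⟩ := exists_apply_ne_one_of_hasEnoughRootsOfUnity M R ha
    refine eq_zero_of_mul_eq_self_left hψ ?_
    simp only [Finset.mul_sum, ← MulChar.mul_apply]
    exact Fintype.sum_bijective _ (Group.mulLeft_bijective ψ) _ _ fun _ ↦ rfl

variable {F R : Type*} [Field F] [CommRing R]

theorem apply_neg_one_mul_self (P : MulChar F R) : P (-1) * P (-1) = 1 := by
  rw [← map_mul, neg_one_mul, neg_neg, map_one]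

end MulChar

open MulChar

section Jacobi

variable {F R : Type*} [Field F] [Fintype F] [CommRing R]

-- Substitute `u ↦ u / (u - 1)`, an involution of `F ∖ {1}`; the terms at `u = 1` vanish.
theorem jacobiSum_eq_apply_neg_one_mul (P Q : MulChar F R) :
    jacobiSum P Q = P (-1) * jacobiSum P (P * Q)⁻¹ := by
  classical
  have hsubst : ∀ u : F, u ≠ 1 →
      P (-1) * (P u * (P * Q)⁻¹ (1 - u)) = P (u / (u - 1)) * Q (1 - u / (u - 1)) := by
    intro u hu
    have hu' : u - 1 ≠ 0 := sub_ne_zero.mpr hu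
    have h1 : u / (u - 1) = (-1) * u * (1 - u)⁻¹ := by field_simp; ring
    have h2 : 1 - u / (u - 1) = (1 - u)⁻¹ := by field_simp; ring
    rw [h2, h1, map_mul, map_mul, ← inv_apply', ← inv_apply', mul_inv, MulChar.mul_apply]
    ring
  have hinv : ∀ u : F, u ≠ 1 → u / (u - 1) / (u / (u - 1) - 1) = u := by
    intro u hu
    have hu' : u - 1 ≠ 0 := sub_ne_zero.mpr hu
    field_simp
    ring
  have hne : ∀ u : F, u ≠ 1 → u / (u - 1) ≠ 1 := by
    intro u hu h
    rw [div_eq_one_iff_eq (sub_ne_zero.mpr hu)] at h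
    exact one_ne_zero (by linear_combination h : (1 : F) = 0)
  rw [jacobiSum, jacobiSum, Finset.mul_sum, ← Finset.sum_erase _ (a := 1) (by simp),
    ← Finset.sum_erase (Finset.univ : Finset F) (a := 1) (by simp)]
  symm
  refine Finset.sum_nbij' (fun u ↦ u / (u - 1)) (fun u ↦ u / (u - 1)) ?_ ?_ ?_ ?_ ?_ <;>
    simp only [Finset.mem_erase, Finset.mem_univ, and_true]
  · exact hne
  · exact hne
  · exact hinv
  · exact hinv
  · exact hsubst

end Jacobi

theorem neg_mul_mul_inv_mul_eq_one_iff {F : Type*} [Field F] {u z : F} (hu : u ≠ 0) (hz : z ≠ 0) :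
    -1 * u * (1 - u)⁻¹ * z = 1 ↔ u = (1 - z)⁻¹ := by
  constructor
  · intro h
    have hu1 : 1 - u ≠ 0 := by
      rintro h'
      simp [h'] at h
    refine eq_inv_of_mul_eq_one_left ?_
    field_simp at h
    linear_combination h
  · rintro rfl
    have hz1 : 1 - z ≠ 0 := by
      rintro h'
      simp [h'] at hu
    field_simp
    rw [sub_sub_cancel_left, div_neg, neg_neg, div_self hz]

section Binomial

variable {F : Type*} [Field F] [Fintype F]

theorem binom_eq_apply_neg_one_mul_jacobiSum (P Q : MulChar F ℂ) :
    binom P Q = (P * Q) (-1) * jacobiSum P (P⁻¹ * Q) := by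
  rw [binom, ← jacobiSum, jacobiSum_eq_apply_neg_one_mul, mul_inv, inv_inv, MulChar.mul_apply]
  ring

theorem binom_mul_mul (B C χ : MulChar F ℂ) :
    binom (B * χ) (C * χ) = (B * C) (-1) * jacobiSum (B * χ) (B⁻¹ * C) := by
  have hχ : (B * χ)⁻¹ * (C * χ) = B⁻¹ * C := by
    rw [mul_inv, mul_mul_mul_comm, inv_mul_cancel, mul_one]
  rw [binom_eq_apply_neg_one_mul_jacobiSum, hχ, mul_mul_mul_comm,
    MulChar.mul_apply _ (χ * χ), MulChar.mul_apply χ, apply_neg_one_mul_self, mul_one]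

theorem binom_self_mul (P Q : MulChar F ℂ) : binom P (P * Q) = jacobiSum Q (P * Q)⁻¹ := by
  rw [binom_eq_apply_neg_one_mul_jacobiSum, inv_mul_cancel_left, jacobiSum_comm,
    jacobiSum_eq_apply_neg_one_mul Q, mul_comm Q P, MulChar.mul_apply, MulChar.mul_apply,
    ← mul_assoc, ← mul_assoc, apply_neg_one_mul_self, one_mul, apply_neg_one_mul_self, one_mul]

theorem binom_mul_self_mul_apply (A χ : MulChar F ℂ) (z : F) :
    binom (A * χ) χ * χ z = ∑ u : F, A u * χ (-1 * u * (1 - u)⁻¹ * z) := by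
  rw [binom, Finset.mul_sum, Finset.sum_mul]
  refine Finset.sum_congr rfl fun u _ ↦ ?_
  rw [MulChar.mul_apply, inv_apply', map_mul, map_mul, map_mul]
  ring

-- Greene's finite-field binomial theorem.
theorem sum_binom_mul_self_mul_apply (A : MulChar F ℂ) (z : F) :
    ∑ χ : MulChar F ℂ, binom (A * χ) χ * χ z = Nat.card Fˣ * (A⁻¹ (1 - z) - deltaF z) := by
  classical
  by_cases hz : z = 0
  · simp [hz, deltaF]
  calc ∑ χ : MulChar F ℂ, binom (A * χ) χ * χ z
      = ∑ u : F, A u * ∑ χ : MulChar F ℂ, χ (-1 * u * (1 - u)⁻¹ * z) := by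
        simp only [binom_mul_self_mul_apply, Finset.mul_sum]
        exact Finset.sum_comm
    _ = ∑ u : F, if u = (1 - z)⁻¹ then Nat.card Fˣ * A u else 0 := by
        refine Finset.sum_congr rfl fun u _ ↦ ?_
        rcases eq_or_ne u 0 with rfl | hu
        · simp
        rw [MulChar.sum_apply_eq_ite, neg_mul_mul_inv_mul_eq_one_iff hu hz]
        split_ifs <;> ring
    _ = Nat.card Fˣ * (A⁻¹ (1 - z) - deltaF z) := by
        rw [Finset.sum_ite_eq', if_pos (Finset.mem_univ _), inv_apply', deltaF, if_neg hz, sub_zero]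

end Binomial

section Appell

variable {F : Type*} [Field F] [Fintype F]

theorem binom_mul_binom_mul_binom_mul_apply (A B B' C C' χ : MulChar F ℂ) (x : F) :
    binom (A * χ) χ * binom (B * χ) (C * χ) * binom (A * C'⁻¹ * χ) (A * B' * C'⁻¹ * χ) * χ x =
      (B * C) (-1) * ∑ u : F, ∑ v : F,
        B u * B' v * (B⁻¹ * C) (1 - u) * (A⁻¹ * B'⁻¹ * C') (1 - v) *
          (binom (A * χ) χ * χ (u * (1 - v)⁻¹ * x)) := by
  rw [binom_mul_mul, show A * B' * C'⁻¹ * χ = A * C'⁻¹ * χ * B' by ac_rfl, binom_self_mul,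
    jacobiSum, jacobiSum]
  simp only [Finset.mul_sum, Finset.sum_mul]
  rw [Finset.sum_comm]
  refine Finset.sum_congr rfl fun u _ ↦ Finset.sum_congr rfl fun v _ ↦ ?_
  simp only [mul_inv, inv_inv, MulChar.mul_apply, map_mul, inv_apply']
  ring

theorem sum_binom_mul_binom_mul_binom_mul_apply (A B B' C C' : MulChar F ℂ) {x : F}
    (hx : x ≠ 0) :
    ∑ χ : MulChar F ℂ, binom (A * χ) χ * binom (B * χ) (C * χ) *
        binom (A * C'⁻¹ * χ) (A * B' * C'⁻¹ * χ) * χ x =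
      Nat.card Fˣ * (B * C) (-1) * ∑ u : F, ∑ v : F,
        B u * B' v * (B⁻¹ * C) (1 - u) * (B'⁻¹ * C') (1 - v) * A⁻¹ (1 - u * x - v) := by
  have hfactor : ∀ u v : F,
      B u * (A⁻¹ * B'⁻¹ * C') (1 - v) *
          (A⁻¹ (1 - u * (1 - v)⁻¹ * x) - deltaF (u * (1 - v)⁻¹ * x)) =
        B u * (B'⁻¹ * C') (1 - v) * A⁻¹ (1 - u * x - v) := by
    intro u v
    rcases eq_or_ne u 0 with rfl | hu
    · simp
    rcases eq_or_ne v 1 with rfl | hv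
    · simp
    have hv' : 1 - v ≠ 0 := sub_ne_zero.mpr (Ne.symm hv)
    have hz : u * (1 - v)⁻¹ * x ≠ 0 := by simp [hu, hv', hx]
    have harg : (1 - v) * (1 - u * (1 - v)⁻¹ * x) = 1 - u * x - v := by field_simp; ring
    rw [deltaF, if_neg hz, sub_zero, ← harg, map_mul, MulChar.mul_apply, MulChar.mul_apply,
      MulChar.mul_apply]
    ring
  calc _ = (B * C) (-1) * ∑ u : F, ∑ v : F,
        B u * B' v * (B⁻¹ * C) (1 - u) * (A⁻¹ * B'⁻¹ * C') (1 - v) *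
          ∑ χ : MulChar F ℂ, binom (A * χ) χ * χ (u * (1 - v)⁻¹ * x) := by
        simp only [binom_mul_binom_mul_binom_mul_apply, Finset.mul_sum]
        rw [Finset.sum_comm]
        refine Finset.sum_congr rfl fun u _ ↦ Finset.sum_comm
    _ = _ := by
        simp only [sum_binom_mul_self_mul_apply, Finset.mul_sum]
        refine Finset.sum_congr rfl fun u _ ↦ Finset.sum_congr rfl fun v _ ↦ ?_
        linear_combination (Nat.card Fˣ * (B * C) (-1) * B' v * (B⁻¹ * C) (1 - u)) *
          hfactor u v

end Appell

theorem natCard_units_eq_card_sub_one (F R : Type*) [Field F] [Fintype F] [AddGroupWithOne R] :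
    (Nat.card Fˣ : R) = Fintype.card F - 1 := by
  classical
  rw [Nat.card_eq_fintype_card, Fintype.card_units, Nat.cast_sub Fintype.card_pos, Nat.cast_one]

/-- F₂ at `y = 1` reduces to a ₃F₂. -/
theorem appellF2_y_one {F : Type*} [Field F] [Fintype F]
    (A B B' C C' : MulChar F ℂ) (x : F) :
    appellF2 A B B' C C' x 1 =
      (B' * C') (-1) * hyper3F2 A B (A * C'⁻¹) C (A * B' * C'⁻¹) x := by
  rcases eq_or_ne x 0 with rfl | hx
  · simp [appellF2, hyper3F2]
  have hq : (Nat.card Fˣ : ℂ) ≠ 0 := Nat.cast_ne_zero.mpr Nat.card_pos.ne'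
  rw [hyper3F2, appellF2, sum_binom_mul_binom_mul_binom_mul_apply A B B' C C' hx,
    ← natCard_units_eq_card_sub_one F ℂ, mul_one, MulChar.one_apply (Ne.isUnit hx)]
  simp only [mul_one, one_mul, mul_assoc (Nat.card Fˣ : ℂ), inv_mul_cancel_left₀ hq]
  simp only [MulChar.mul_apply]
  ring
end

section
/- For all complex-valued multiplicative characters A, B, B', C, C' of a finite field F_q with q elements and all y ∈ F_q, one has F₂(A;B,B';C,C';1,y) = (BC)(-1)·₃F₂(A, B', AC̄; C', ABC̄ | y). -/
open Finset

/-!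
With `x = 1` and `a = 1 - u`, the factor `Ā(a - vy)` is expanded by a homogeneous form of Greene's
binomial theorem, `Ā(a - z) = (q-1)⁻¹ Σ_χ {Aχ choose χ} (Aχ)⁻¹(a) χ(z)` for `a, z ≠ 0`, which is
Mellin inversion on `Fˣ` applied to `t ↦ Ā(a - t)`. For each `χ` the double sum over `u, v` then
splits into the Jacobi sums `J(B, B̄CĀχ̄)` and `J(B'χ, B̄'C')`, and the reflection
`J(χ, ψ) = χ(-1) J(χ, (χψ)⁻¹)` (the substitution `t ↦ t/(t-1)`) turns them into
`{AC̄χ choose ABC̄χ}` and `(B'C')(-1) {B'χ choose C'χ}`.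
-/

lemma MulChar.apply_neg_one_mul_apply_neg_one {R R' : Type*} [CommRing R]
    [CommMonoidWithZero R'] (χ : MulChar R R') : χ (-1) * χ (-1) = 1 := by
  rw [← map_mul, neg_one_mul, neg_neg, map_one]

lemma jacobiSum_eq_apply_neg_one_mul_jacobiSum {F R : Type*} [Field F] [Fintype F] [CommRing R]
    (χ ψ : MulChar F R) : jacobiSum χ ψ = χ (-1) * jacobiSum χ (χ * ψ)⁻¹ := by
  -- `t ↦ t / (t - 1)`, written as an involution of all of `F` (it fixes `1` since `0⁻¹ = 0`)
  have hg : Function.Involutive fun t : F ↦ 1 + (t - 1)⁻¹ := fun t ↦ by simp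
  rw [jacobiSum, jacobiSum, mul_sum]
  refine Fintype.sum_equiv hg.toPerm _ _ fun t ↦ ?_
  show χ t * ψ (1 - t) = χ (-1) * (χ (1 + (t - 1)⁻¹) * (χ * ψ)⁻¹ (1 - (1 + (t - 1)⁻¹)))
  rcases eq_or_ne t 1 with rfl | ht
  · have h0 : ¬IsUnit (0 : F) := not_isUnit_zero
    simp [MulChar.map_nonunit _ h0]
  have ht' : 1 - t ≠ 0 := sub_ne_zero.mpr ht.symm
  have h1 : 1 - (1 + (t - 1)⁻¹) = (1 - t)⁻¹ := by rw [← neg_sub t 1, inv_neg]; ring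
  have h2 : 1 + (t - 1)⁻¹ = -1 * (t * (1 - t)⁻¹) := by field_simp; ring
  have hunit : χ (1 - t)⁻¹ * χ (1 - t) = 1 := by rw [← map_mul, inv_mul_cancel₀ ht', map_one]
  rw [h1, h2, MulChar.inv_apply', inv_inv]
  simp only [map_mul, MulChar.mul_apply]
  linear_combination (-(χ t * ψ (1 - t))) *
    (χ (1 - t)⁻¹ * χ (1 - t) * χ.apply_neg_one_mul_apply_neg_one + hunit)

section

variable {F : Type*} [Field F] [Fintype F]

lemma binom_eq_jacobiSum (χ ψ : MulChar F ℂ) :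
    binom χ ψ = (χ * ψ) (-1) * jacobiSum χ (χ⁻¹ * ψ) := by
  have h : (χ * ψ⁻¹)⁻¹ = χ⁻¹ * ψ := by rw [mul_inv, inv_inv]
  rw [binom, ← jacobiSum, jacobiSum_eq_apply_neg_one_mul_jacobiSum, h, MulChar.mul_apply]
  ring

lemma jacobiSum_eq_binom (χ ψ : MulChar F ℂ) :
    jacobiSum χ ψ = binom (χ * ψ)⁻¹ ψ⁻¹ := by
  have h : (ψ * (χ * ψ)⁻¹)⁻¹ = χ := by rw [mul_inv_rev, inv_inv, mul_inv_cancel_right]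
  calc jacobiSum χ ψ = ψ (-1) * ψ (-1) * jacobiSum ψ (ψ * (χ * ψ)⁻¹)⁻¹ := by
        rw [h, ψ.apply_neg_one_mul_apply_neg_one, one_mul, jacobiSum_comm]
    _ = ψ⁻¹ (-1) * jacobiSum ψ (χ * ψ)⁻¹ := by
        rw [mul_assoc, ← jacobiSum_eq_apply_neg_one_mul_jacobiSum, MulChar.inv_apply',
          inv_neg_one]
    _ = binom (χ * ψ)⁻¹ ψ⁻¹ := by rw [binom, inv_inv, jacobiSum_comm, jacobiSum]

lemma jacobiSum_inv_mul_mul_inv_eq_binom (A B C χ : MulChar F ℂ) :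
    jacobiSum B (B⁻¹ * C * (A * χ)⁻¹) = binom (A * C⁻¹ * χ) (A * B * C⁻¹ * χ) := by
  rw [jacobiSum_eq_binom, mul_assoc B⁻¹, mul_inv_cancel_left]
  congr 1 <;> simp only [mul_inv, inv_inv] <;> ac_rfl

lemma jacobiSum_mul_inv_mul_eq_binom (B C χ : MulChar F ℂ) :
    jacobiSum (B * χ) (B⁻¹ * C) = (B * C) (-1) * binom (B * χ) (C * χ) := by
  have h : B * χ * (C * χ) = B * C * (χ * χ) := by ac_rfl
  rw [binom_eq_jacobiSum, mul_inv, mul_mul_mul_comm B⁻¹, inv_mul_cancel, mul_one, h,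
    MulChar.mul_apply (B * C), MulChar.mul_apply χ, χ.apply_neg_one_mul_apply_neg_one, mul_one,
    ← mul_assoc, (B * C).apply_neg_one_mul_apply_neg_one, one_mul]

lemma sum_mulChar_apply_one : ∑ χ : MulChar F ℂ, χ 1 = (Fintype.card F : ℂ) - 1 := by
  classical
  have hcard : Fintype.card (MulChar F ℂ) = Fintype.card F - 1 := by
    rw [← Nat.card_eq_fintype_card, MulChar.card_eq_card_units_of_hasEnoughRootsOfUnity F ℂ,
      Nat.card_eq_fintype_card, Fintype.card_units]
  simp [hcard, Nat.cast_sub Fintype.card_pos]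

lemma sum_mulChar_apply_eq_zero {a : F} (ha : a ≠ 1) : ∑ χ : MulChar F ℂ, χ a = 0 := by
  by_cases hu : IsUnit a
  · obtain ⟨χ₀, hχ₀⟩ := MulChar.exists_apply_ne_one_of_hasEnoughRootsOfUnity F ℂ ha
    refine eq_zero_of_mul_eq_self_left hχ₀ ?_
    simp only [mul_sum, ← MulChar.mul_apply]
    exact Fintype.sum_bijective _ (Group.mulLeft_bijective χ₀) _ _ fun χ ↦ rfl
  · simp [MulChar.map_nonunit _ hu]

lemma mulChar_mellin_inversion (f : F → ℂ) {z : F} (hz : z ≠ 0) :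
    f z = ((Fintype.card F : ℂ) - 1)⁻¹ *
      ∑ χ : MulChar F ℂ, (∑ t, f t * χ⁻¹ t) * χ z := by
  have hq : (Fintype.card F : ℂ) - 1 ≠ 0 :=
    sub_ne_zero.mpr (by exact_mod_cast Fintype.one_lt_card.ne')
  have hsum : ∑ χ : MulChar F ℂ, (∑ t, f t * χ⁻¹ t) * χ z
      = ∑ t, f t * ∑ χ : MulChar F ℂ, χ (t⁻¹ * z) := by
    simp only [sum_mul, mul_sum, mul_assoc, MulChar.inv_apply', ← map_mul]
    exact sum_comm
  rw [hsum, sum_eq_single z, inv_mul_cancel₀ hz, sum_mulChar_apply_one, mul_comm (f z),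
    inv_mul_cancel_left₀ hq]
  · intro t _ ht
    refine mul_eq_zero_of_right _ (sum_mulChar_apply_eq_zero fun h ↦ ht ?_)
    exact (inv_mul_eq_one₀ (by rintro rfl; simp at h)).mp h
  · simp

lemma sum_inv_apply_sub_mul_inv_apply (A χ : MulChar F ℂ) {a : F} (ha : a ≠ 0) :
    ∑ t, A⁻¹ (a - t) * χ⁻¹ t = binom (A * χ) χ * (A * χ)⁻¹ a := by
  have h : (A⁻¹ * χ⁻¹)⁻¹ = A * χ := by rw [← mul_inv, inv_inv]
  rw [← Fintype.sum_bijective (a * ·) (mulLeft_bijective₀ a ha) _ _ fun s ↦ rfl]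
  calc ∑ s, A⁻¹ (a - a * s) * χ⁻¹ (a * s) = (A * χ)⁻¹ a * jacobiSum χ⁻¹ A⁻¹ := by
        simp only [jacobiSum, mul_sum, ← mul_one_sub, map_mul, mul_inv, MulChar.mul_apply]
        exact sum_congr rfl fun s _ ↦ by ring
    _ = binom (A * χ) χ * (A * χ)⁻¹ a := by
        rw [jacobiSum_comm, jacobiSum_eq_binom, h, inv_inv, mul_comm]

lemma inv_apply_sub_eq_sum_binom (A : MulChar F ℂ) {a z : F} (ha : a ≠ 0) (hz : z ≠ 0) :
    A⁻¹ (a - z) = ((Fintype.card F : ℂ) - 1)⁻¹ *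
      ∑ χ : MulChar F ℂ, binom (A * χ) χ * (A * χ)⁻¹ a * χ z := by
  simpa only [sum_inv_apply_sub_mul_inv_apply A _ ha] using
    mulChar_mellin_inversion (fun t ↦ A⁻¹ (a - t)) hz

lemma mul_inv_apply_one_sub_sub_mul_eq_sum (A B B' P Q : MulChar F ℂ) {y : F} (hy : y ≠ 0)
    (u v : F) :
    B u * B' v * P (1 - u) * Q (1 - v) * A⁻¹ (1 - u - v * y) =
      ((Fintype.card F : ℂ) - 1)⁻¹ * ∑ χ : MulChar F ℂ, binom (A * χ) χ * χ y *
        ((B u * (P * (A * χ)⁻¹) (1 - u)) * ((B' * χ) v * Q (1 - v))) := by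
  rcases eq_or_ne u 1 with rfl | hu
  · simp [MulChar.map_zero]
  rcases eq_or_ne v 0 with rfl | hv
  · simp [MulChar.map_zero]
  rw [inv_apply_sub_eq_sum_binom A (sub_ne_zero.mpr hu.symm) (mul_ne_zero hv hy), mul_left_comm,
    mul_sum]
  exact congrArg _ (sum_congr rfl fun χ _ ↦ by simp only [MulChar.mul_apply, map_mul]; ring)

end

/-- F₂ at `x = 1` reduces to a ₃F₂. -/
theorem appellF2_x_one {F : Type*} [Field F] [Fintype F]
    (A B B' C C' : MulChar F ℂ) (y : F) :
    appellF2 A B B' C C' 1 y =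
      (B * C) (-1) * hyper3F2 A B' (A * C⁻¹) C' (A * B * C⁻¹) y := by
  rcases eq_or_ne y 0 with rfl | hy
  · simp [appellF2, hyper3F2, MulChar.map_zero]
  have hsign : B * B' * C * C' = (B * C) * (B' * C') := by ac_rfl
  calc appellF2 A B B' C C' 1 y = (B * B' * C * C') (-1) * (((Fintype.card F : ℂ) - 1)⁻¹ *
        ∑ χ : MulChar F ℂ, binom (A * χ) χ * χ y *
          (jacobiSum B (B⁻¹ * C * (A * χ)⁻¹) * jacobiSum (B' * χ) (B'⁻¹ * C'))) := by
        simp only [appellF2, one_mul, mul_one, MulChar.one_apply hy.isUnit,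
          mul_inv_apply_one_sub_sub_mul_eq_sum A B B' (B⁻¹ * C) (B'⁻¹ * C') hy, ← mul_sum]
        congr 2
        simp only [jacobiSum, sum_mul_sum]
        simp only [mul_sum]
        exact (sum_congr rfl fun u _ ↦ sum_comm).trans sum_comm
    _ = (B * C) (-1) * hyper3F2 A B' (A * C⁻¹) C' (A * B * C⁻¹) y := by
        rw [hsign, MulChar.mul_apply]
        simp only [jacobiSum_inv_mul_mul_inv_eq_binom, jacobiSum_mul_inv_mul_eq_binom, hyper3F2,
          mul_sum]
        refine sum_congr rfl fun χ _ ↦ ?_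
        linear_combination (B * C) (-1) * ((Fintype.card F : ℂ) - 1)⁻¹ * binom (A * χ) χ * χ y *
          binom (A * C⁻¹ * χ) (A * B * C⁻¹ * χ) * binom (B' * χ) (C' * χ) *
          (B' * C').apply_neg_one_mul_apply_neg_one
end

section
/- Let A be a complex-valued multiplicative character of a finite field F_q with q elements and let x, y ∈ F_q with y ≠ -1. Then A(1+x+y) = δ(x)δ(y) + (1/(q-1))·( δ(x)·Σ_χ {A choose χ}χ(y) + δ(y)·Σ_χ {A choose χ}χ(x) ) + (1/(q-1)²)·Σ_{χ,λ} {A choose χ}{Aχ̄ choose λ}·χ(x)λ(y), where all sums run over all multiplicative characters of F_q. Moreover, if y = -1 then A(1+x+y) = A(x). -/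
open Finset

open scoped Classical in
lemma sum_chars {F : Type*} [Field F] [Fintype F] (a : F) :
    ∑ χ : MulChar F ℂ, χ a = if a = 1 then ((Fintype.card F : ℂ) - 1) else 0 := by
  split_ifs with ha
  · subst ha
    simp only [map_one, Finset.sum_const, Finset.card_univ, nsmul_eq_mul, mul_one]
    have h1 : Fintype.card (MulChar F ℂ) = Fintype.card F - 1 := by
      rw [← Nat.card_eq_fintype_card, MulChar.card_eq_card_units_of_hasEnoughRootsOfUnity,
        Nat.card_eq_fintype_card, Fintype.card_units]
    rw [h1, Nat.cast_sub Fintype.card_pos, Nat.cast_one]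
  · obtain ⟨χ, hχ⟩ := MulChar.exists_apply_ne_one_of_hasEnoughRootsOfUnity F ℂ ha
    refine eq_zero_of_mul_eq_self_left hχ ?_
    simp only [Finset.mul_sum, ← MulChar.mul_apply]
    exact Fintype.sum_bijective _ (Group.mulLeft_bijective χ) _ _ fun χ' ↦ rfl

lemma card_sub_one_ne {F : Type*} [Field F] [Fintype F] :
    ((Fintype.card F : ℂ) - 1) ≠ 0 :=
  sub_ne_zero.mpr fun h => Fintype.one_lt_card.ne' (Nat.cast_eq_one.mp h)

open scoped Classical in
lemma binomial_thm {F : Type*} [Field F] [Fintype F] (A : MulChar F ℂ) (z : F) :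
    A (1 + z) = deltaF z +
      ((Fintype.card F : ℂ) - 1)⁻¹ * ∑ χ : MulChar F ℂ, binom A χ * χ z := by
  have key : ∑ χ : MulChar F ℂ, binom A χ * χ z
      = if z = 0 then 0 else ((Fintype.card F : ℂ) - 1) * A (1 + z) := by
    have h1 : ∀ χ : MulChar F ℂ, binom A χ * χ z = ∑ u : F, A u * χ (-(1-u)⁻¹ * z) := by
      intro χ
      calc binom A χ * χ z = ∑ u : F, A u * (χ (1-u)⁻¹ * (χ (-1) * χ z)) := by
            rw [binom, mul_comm (χ (-1)), mul_assoc, Finset.sum_mul]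
            exact Finset.sum_congr rfl fun u _ ↦ by rw [MulChar.inv_apply']; ring
        _ = ∑ u : F, A u * χ (-(1-u)⁻¹ * z) := by
            refine Finset.sum_congr rfl fun u _ ↦ ?_
            rw [← map_mul, ← map_mul]
            congr 2
            ring
    simp only [h1]
    rw [Finset.sum_comm]
    simp only [← Finset.mul_sum, sum_chars]
    have hcond : ∀ u : F, (-(1-u)⁻¹ * z = 1) ↔ (z ≠ 0 ∧ u = 1 + z) := by
      intro u
      constructor
      · intro h
        have hu : (1:F) - u ≠ 0 := by
          intro h0; rw [h0] at h; simp at h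
        have hz : z ≠ 0 := by rintro rfl; simp at h
        refine ⟨hz, ?_⟩
        field_simp at h
        linear_combination h
      · rintro ⟨hz, rfl⟩
        have : (1:F) - (1 + z) = -z := by ring
        rw [this]
        field_simp
    by_cases hz : z = 0
    · subst hz
      simp
    · rw [if_neg hz]
      simp only [hcond, hz, ne_eq, not_false_iff, true_and]
      simp only [mul_ite, mul_zero]
      rw [Finset.sum_ite_eq' Finset.univ (1+z)]
      simp [mul_comm]
  rw [key, deltaF]
  by_cases hz : z = 0
  · subst hz
    simp
  · rw [if_neg hz, if_neg hz]
    rw [zero_add, ← mul_assoc, inv_mul_cancel₀ card_sub_one_ne, one_mul]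

/-- the finite-field trinomial theorem. -/
theorem trinomial_theorem {F : Type*} [Field F] [Fintype F]
    (A : MulChar F ℂ) (x y : F) :
    (y ≠ -1 →
      A (1 + x + y) =
        deltaF x * deltaF y +
        ((Fintype.card F : ℂ) - 1)⁻¹ *
          (deltaF x * ∑ χ : MulChar F ℂ, binom A χ * χ y +
           deltaF y * ∑ χ : MulChar F ℂ, binom A χ * χ x) +
        ((Fintype.card F : ℂ) - 1)⁻¹ ^ 2 *
          ∑ χ : MulChar F ℂ, ∑ lam : MulChar F ℂ,
            binom A χ * binom (A * χ⁻¹) lam * χ x * lam y) ∧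
    (y = -1 → A (1 + x + y) = A x) := by
  classical
  constructor
  · intro hy
    have ht : (1:F) + y ≠ 0 := fun h ↦ hy (by linear_combination h)
    have h1 : (1:F) + x + y = (1 + y) * (1 + x * (1+y)⁻¹) := by
      field_simp
      ring
    rw [h1, map_mul, binomial_thm A (x * (1+y)⁻¹)]
    have hδ : deltaF (x * ((1:F)+y)⁻¹) = deltaF x := by
      unfold deltaF
      by_cases hx : x = 0
      · simp [hx]
      · rw [if_neg (mul_ne_zero hx (inv_ne_zero ht)), if_neg hx]
    rw [hδ]
    set c : ℂ := ((Fintype.card F : ℂ) - 1)⁻¹ with hc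
    have step1 : A ((1:F)+y) * (deltaF x + c * ∑ χ : MulChar F ℂ, binom A χ * χ (x * (1+y)⁻¹))
        = deltaF x * A ((1:F)+y) +
          c * ∑ χ : MulChar F ℂ, binom A χ * χ x * ((A * χ⁻¹) ((1:F)+y)) := by
      rw [mul_add, mul_comm (A ((1:F)+y)) (deltaF x), mul_left_comm (A ((1:F)+y)) c,
        Finset.mul_sum]
      congr 1
      refine congrArg (c * ·) (Finset.sum_congr rfl fun χ _ ↦ ?_)
      rw [map_mul, ← MulChar.inv_apply', MulChar.mul_apply]
      ring
    rw [step1]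
    simp only [binomial_thm, ← hc]
    have e1 : ∑ χ : MulChar F ℂ, binom A χ * χ x * deltaF y
        = deltaF y * ∑ χ : MulChar F ℂ, binom A χ * χ x := by
      rw [Finset.mul_sum]; exact Finset.sum_congr rfl fun _ _ ↦ by ring
    have e2 : ∑ χ : MulChar F ℂ, binom A χ * χ x *
          (c * ∑ lam : MulChar F ℂ, binom (A * χ⁻¹) lam * lam y)
        = c * ∑ χ : MulChar F ℂ, ∑ lam : MulChar F ℂ,
            binom A χ * binom (A * χ⁻¹) lam * χ x * lam y := by
      rw [Finset.mul_sum]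
      refine Finset.sum_congr rfl fun χ _ ↦ ?_
      simp only [Finset.mul_sum]
      exact Finset.sum_congr rfl fun lam _ ↦ by ring
    have e3 : ∑ χ : MulChar F ℂ, binom A χ * χ x *
          (deltaF y + c * ∑ lam : MulChar F ℂ, binom (A * χ⁻¹) lam * lam y)
        = deltaF y * (∑ χ : MulChar F ℂ, binom A χ * χ x) +
          c * ∑ χ : MulChar F ℂ, ∑ lam : MulChar F ℂ,
            binom A χ * binom (A * χ⁻¹) lam * χ x * lam y := by
      simp only [mul_add]
      rw [Finset.sum_add_distrib, e1, e2]
    rw [e3]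
    ring
  · intro hy
    subst hy
    have : (1:F) + x + (-1) = x := by ring
    rw [this]
end

section
/- Let A, B, B', C' be complex-valued multiplicative characters of a finite field F_q with q elements, let x ∈ F_q with x ≠ 1, and let y ∈ F_q. Then F₂(A;B,B';B,C';x,y) = -ε(x)·Ā(1-x)·₂F₁(A,B';C' | y/(1-x)) + B̄(x)·{AB̄ choose B̄}·₂F₁(AB̄, B'; C' | y) + (q-1)·δ(AB̄)·Ā(-x)·C̄'(y)·(B̄'C')(1-y). -/
/-!
With `C = B` the factor `(B̄C)(1-u)` of the Appell series is `ε(1-u)`, which differs from `1`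
only at `u = 1`. Away from that point the inner sum `∑_u B(u)·Ā(t - u·x)`, `t = 1 - v·y`,
is evaluated by the substitution `u ↦ t·u/x`: it equals `B̄(x)·(BĀ)(t)·J(B,Ā)` for `t ≠ 0`
and `Ā(-x)·∑_w (BĀ)(w)` for `t = 0`. Summed against the `₂F₁`-kernel in `v`, the generic part
gives the `₂F₁` with parameter `AB̄` (as `J(B,Ā) = {AB̄ choose B̄}`), the point `t = 0` (that is
`v = 1/y`) the `δ`-term, and the removed point `u = 1` the `₂F₁` at `y/(1-x)`.
-/

open Finset

namespace MulChar

variable {F R : Type*} [Field F] [CommRing R]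

lemma apply_neg_one_mul_self_s7 {S : Type*} [CommRing S] (χ : MulChar S R) : χ (-1) * χ (-1) = 1 := by
  rw [← map_mul, neg_one_mul, neg_neg, map_one]

lemma inv_apply_neg_one (χ : MulChar F R) : χ⁻¹ (-1) = χ (-1) := by
  rw [inv_apply', inv_neg_one]

lemma apply_mul_apply_inv (χ : MulChar F R) {y : F} (hy : y ≠ 0) : χ y * χ y⁻¹ = 1 := by
  rw [← map_mul, mul_inv_cancel₀ hy, map_one]

lemma one_apply_div {y c : F} (hc : c ≠ 0) : (1 : MulChar F R) (y / c) = (1 : MulChar F R) y := by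
  rw [div_eq_mul_inv, map_mul, one_apply (isUnit_iff_ne_zero.mpr (inv_ne_zero hc)), mul_one]

lemma apply_one_sub_inv (χ : MulChar F R) {y : F} (hy : y ≠ 0) :
    χ (1 - y⁻¹) = χ (-1) * χ⁻¹ y * χ (1 - y) := by
  have : 1 - y⁻¹ = -1 * y⁻¹ * (1 - y) := by field_simp; ring
  rw [this, map_mul, map_mul, inv_apply']

lemma sum_mul_one_apply_one_sub [Fintype F] (χ : MulChar F R) (f : F → R) :
    ∑ u, χ u * (1 : MulChar F R) (1 - u) * f u = ∑ u, χ u * f u - f 1 := by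
  classical
  have hpoint : ∀ u, χ u * (1 : MulChar F R) (1 - u) * f u =
      χ u * f u - if u = 1 then f 1 else 0 := by
    intro u
    rcases eq_or_ne u 1 with rfl | hu
    · simp
    · rw [one_apply (isUnit_iff_ne_zero.mpr (sub_ne_zero.mpr hu.symm)), if_neg hu]
      ring
  simp only [hpoint, sum_sub_distrib, sum_ite_eq', mem_univ, if_true]

lemma sum_apply_mul_apply_sub_mul [Fintype F] [DecidableEq F] (χ ψ : MulChar F R) {x : F}
    (hx : x ≠ 0) (t : F) :
    ∑ u, χ u * ψ (t - u * x) =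
      χ⁻¹ x * (χ * ψ) t * jacobiSum χ ψ + if t = 0 then ψ (-x) * ∑ w, (χ * ψ) w else 0 := by
  rcases eq_or_ne t 0 with rfl | ht
  · rw [if_pos rfl, MulChar.map_zero, mul_zero, zero_mul, zero_add, mul_sum]
    refine sum_congr rfl fun u _ => ?_
    rw [show (0 : F) - u * x = -x * u by ring, map_mul, mul_apply]
    ring
  · have htx : t * x⁻¹ ≠ 0 := mul_ne_zero ht (inv_ne_zero hx)
    rw [if_neg ht, add_zero, jacobiSum, mul_sum]
    calc ∑ u, χ u * ψ (t - u * x) = ∑ s, χ (t * x⁻¹ * s) * ψ (t - t * x⁻¹ * s * x) :=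
          (Equiv.sum_comp (Equiv.mulLeft₀ _ htx) fun u => χ u * ψ (t - u * x)).symm
      _ = _ := sum_congr rfl fun s _ => by
          rw [show t - t * x⁻¹ * s * x = t * (1 - s) by field_simp]
          simp only [map_mul, mul_apply, inv_apply' χ x]
          ring

lemma _root_.jacobiSum_mul_inv [Fintype F] (χ ψ : MulChar F R) :
    jacobiSum (χ * ψ⁻¹) ψ = ψ (-1) * jacobiSum ψ χ⁻¹ := by
  rw [jacobiSum_comm ψ, jacobiSum, jacobiSum, mul_sum]
  calc ∑ u, (χ * ψ⁻¹) u * ψ (1 - u) = ∑ u, (χ * ψ⁻¹) u⁻¹ * ψ (1 - u⁻¹) :=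
        (Equiv.sum_comp (Equiv.inv F) fun u => (χ * ψ⁻¹) u * ψ (1 - u)).symm
    _ = _ := sum_congr rfl fun u _ => ?_
  rcases eq_or_ne u 0 with rfl | hu
  · simp
  · rw [apply_one_sub_inv ψ hu]
    simp only [mul_apply, inv_apply', inv_inv]
    linear_combination (χ u⁻¹ * ψ (-1) * ψ (1 - u)) * apply_mul_apply_inv ψ hu

/-- Only `v = 1/y` contributes, and there the `₂F₁`-kernel `χ(v)·(χ̄ψ)(1-v)` equals
`(χψ)(-1)·ψ̄(y)·(χ̄ψ)(1-y)`. -/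
lemma sum_mul_ite_one_sub_mul_eq_zero [Fintype F] [DecidableEq F] (χ ψ : MulChar F R) (y : F)
    (c : R) :
    (1 : MulChar F R) y * (χ * ψ) (-1) *
        ∑ v, χ v * (χ⁻¹ * ψ) (1 - v) * (if 1 - v * y = 0 then c else 0) =
      c * ψ⁻¹ y * (χ⁻¹ * ψ) (1 - y) := by
  rcases eq_or_ne y 0 with rfl | hy
  · simp
  have hv : ∀ v : F, 1 - v * y = 0 ↔ v = y⁻¹ := fun v => by
    rw [sub_eq_zero, eq_comm, ← eq_div_iff hy, one_div]
  simp only [hv, mul_ite, mul_zero, sum_ite_eq', mem_univ, if_true,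
    one_apply (isUnit_iff_ne_zero.mpr hy), one_mul, apply_one_sub_inv _ hy]
  simp only [mul_apply, inv_apply', inv_inv, inv_neg_one]
  linear_combination (c * ψ y⁻¹ * χ (1 - y)⁻¹ * ψ (1 - y)) *
    (ψ (-1) * ψ (-1) * (χ y * χ y⁻¹) * apply_neg_one_mul_self_s7 χ +
      χ y * χ y⁻¹ * apply_neg_one_mul_self_s7 ψ + apply_mul_apply_inv χ hy)

end MulChar

section

variable {F : Type*} [Field F] [Fintype F]

lemma sum_apply_eq_card_sub_one_mul_deltaChar (χ : MulChar F ℂ) :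
    ∑ a, χ a = ((Fintype.card F : ℂ) - 1) * deltaChar χ := by
  classical
  unfold deltaChar
  split_ifs with h
  · rw [h, MulChar.sum_one_eq_card_units, Fintype.card_units, Nat.cast_sub Fintype.card_pos,
      Nat.cast_one, mul_one]
  · rw [MulChar.sum_eq_zero_of_ne_one h, mul_zero]

lemma deltaChar_inv (χ : MulChar F ℂ) : deltaChar χ⁻¹ = deltaChar χ := by
  simp only [deltaChar, inv_eq_one]

lemma binom_mul_inv_inv (A B : MulChar F ℂ) : binom (A * B⁻¹) B⁻¹ = jacobiSum B A⁻¹ := by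
  rw [binom, ← jacobiSum, inv_inv, jacobiSum_mul_inv, ← mul_assoc,
    MulChar.inv_apply_neg_one, MulChar.apply_neg_one_mul_self_s7, one_mul]

lemma inv_apply_mul_gauss2F1_div (A B C : MulChar F ℂ) {c : F} (hc : c ≠ 0) (y : F) :
    A⁻¹ c * gauss2F1 A B C (y / c) =
      (1 : MulChar F ℂ) y * (B * C) (-1) * ∑ v, B v * (B⁻¹ * C) (1 - v) * A⁻¹ (c - v * y) := by
  rw [gauss2F1, MulChar.one_apply_div hc, mul_left_comm, mul_sum]
  congr 1
  refine sum_congr rfl fun v _ => ?_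
  rw [show c - v * y = c * (1 - y / c * v) by field_simp, map_mul]
  ring

lemma gauss2F1_eq_sum (A B C : MulChar F ℂ) (y : F) :
    gauss2F1 A B C y =
      (1 : MulChar F ℂ) y * (B * C) (-1) * ∑ v, B v * (B⁻¹ * C) (1 - v) * A⁻¹ (1 - v * y) := by
  simpa using inv_apply_mul_gauss2F1_div A B C one_ne_zero y

lemma appellF2_C_eq_B_eq_sum [DecidableEq F] (A B B' C' : MulChar F ℂ) {x : F} (hx : x ≠ 0)
    (y : F) :
    appellF2 A B B' B C' x y =
      (1 : MulChar F ℂ) y * (B' * C') (-1) *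
        (B⁻¹ x * jacobiSum B A⁻¹ * ∑ v, B' v * (B'⁻¹ * C') (1 - v) * (B * A⁻¹) (1 - v * y) +
          ∑ v, B' v * (B'⁻¹ * C') (1 - v) *
            (if 1 - v * y = 0 then A⁻¹ (-x) * ∑ w, (B * A⁻¹) w else 0) -
          ∑ v, B' v * (B'⁻¹ * C') (1 - v) * A⁻¹ (1 - x - v * y)) := by
  have hinner : ∀ v : F,
      ∑ u, B u * B' v * (B⁻¹ * B) (1 - u) * (B'⁻¹ * C') (1 - v) * A⁻¹ (1 - u * x - v * y) =
        B' v * (B'⁻¹ * C') (1 - v) *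
          (B⁻¹ x * (B * A⁻¹) (1 - v * y) * jacobiSum B A⁻¹ +
            (if 1 - v * y = 0 then A⁻¹ (-x) * ∑ w, (B * A⁻¹) w else 0) -
            A⁻¹ (1 - x - v * y)) := fun v => by
    rw [← MulChar.sum_apply_mul_apply_sub_mul B A⁻¹ hx,
      show 1 - x - v * y = 1 - v * y - 1 * x by ring,
      ← MulChar.sum_mul_one_apply_one_sub B fun u => A⁻¹ (1 - v * y - u * x), inv_mul_cancel,
      mul_sum]
    refine sum_congr rfl fun u _ => ?_
    rw [show 1 - u * x - v * y = 1 - v * y - u * x by ring]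
    ring
  have hsign : (B * B' * B * C') (-1) = (B' * C') (-1) := by
    simp only [MulChar.mul_apply]
    linear_combination B' (-1) * C' (-1) * MulChar.apply_neg_one_mul_self_s7 B
  rw [appellF2, sum_comm, sum_congr rfl fun v _ => hinner v, hsign, map_mul,
    MulChar.one_apply (isUnit_iff_ne_zero.mpr hx), one_mul]
  congr 1
  rw [mul_sum univ _ (B⁻¹ x * jacobiSum B A⁻¹), ← sum_add_distrib, ← sum_sub_distrib]
  exact sum_congr rfl fun v _ => by ring

end

/-- reduction formula for `F₂(A;B,B';B,C';x,y)`, `x ≠ 1`. -/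
theorem appellF2_C_eq_B {F : Type*} [Field F] [Fintype F]
    (A B B' C' : MulChar F ℂ) (x y : F) (hx : x ≠ 1) :
    appellF2 A B B' B C' x y =
      -(1 : MulChar F ℂ) x * A⁻¹ (1 - x) * gauss2F1 A B' C' (y / (1 - x)) +
      B⁻¹ x * binom (A * B⁻¹) B⁻¹ * gauss2F1 (A * B⁻¹) B' C' y +
      ((Fintype.card F : ℂ) - 1) * deltaChar (A * B⁻¹) * A⁻¹ (-x) * C'⁻¹ y *
        (B'⁻¹ * C') (1 - y) := by
  classical
  rcases eq_or_ne x 0 with rfl | hx0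
  · simp [appellF2, MulChar.map_zero]
  have hfirst := inv_apply_mul_gauss2F1_div A B' C' (sub_ne_zero.mpr hx.symm) y
  have hsecond := gauss2F1_eq_sum (A * B⁻¹) B' C' y
  have hdelta := MulChar.sum_mul_ite_one_sub_mul_eq_zero B' C' y (A⁻¹ (-x) * ∑ w, (B * A⁻¹) w)
  rw [mul_inv_rev, inv_inv] at hsecond
  have hsum : ∑ w, (B * A⁻¹) w = ((Fintype.card F : ℂ) - 1) * deltaChar (A * B⁻¹) := by
    rw [sum_apply_eq_card_sub_one_mul_deltaChar, ← deltaChar_inv, mul_inv_rev, inv_inv]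
  rw [appellF2_C_eq_B_eq_sum A B B' C' hx0, binom_mul_inv_inv,
    MulChar.one_apply (isUnit_iff_ne_zero.mpr hx0)]
  linear_combination hfirst - B⁻¹ x * jacobiSum B A⁻¹ * hsecond + hdelta +
    A⁻¹ (-x) * C'⁻¹ y * (B'⁻¹ * C') (1 - y) * hsum
end

section
/- Let A, B, B', C, C' be complex-valued multiplicative characters of a finite field F_q and let x, y ∈ F_q with x ≠ 1. Then F₂(A;B,B';C,C';x,y) = C(-1)·Ā(1-x)·F₂(A; B̄C, B'; C, C'; -x/(1-x), y/(1-x)). -/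
open Finset

/-- transformation of F₂, first form, `x ≠ 1`. -/
theorem appellF2_transformation_x {F : Type*} [Field F] [Fintype F]
    (A B B' C C' : MulChar F ℂ) (x y : F) (hx : x ≠ 1) :
    appellF2 A B B' C C' x y =
      C (-1) * A⁻¹ (1 - x) *
        appellF2 A (B⁻¹ * C) B' C C' (-x / (1 - x)) (y / (1 - x)) := by
  have h1x : (1 : F) - x ≠ 0 := sub_ne_zero.mpr fun h => hx h.symm
  unfold appellF2
  have hsum : ∀ v : F,
      (∑ u : F, B u * B' v * (B⁻¹ * C) (1 - u) * (B'⁻¹ * C') (1 - v) *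
        A⁻¹ (1 - u * x - v * y))
      = A⁻¹ (1 - x) * ∑ u : F, (B⁻¹ * C) u * B' v * ((B⁻¹ * C)⁻¹ * C) (1 - u) *
          (B'⁻¹ * C') (1 - v) * A⁻¹ (1 - u * (-x / (1 - x)) - v * (y / (1 - x))) := by
    intro v
    rw [Finset.mul_sum]
    refine Fintype.sum_equiv (Equiv.subLeft (1 : F)) _ _ fun u => ?_
    have e2 : (1 : F) - u * x - v * y
        = (1 - x) * (1 - (1 - u) * (-x / (1 - x)) - v * (y / (1 - x))) := by
      field_simp
      ring
    have e3 : ((B⁻¹ * C)⁻¹ * C) = B := by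
      rw [mul_inv, inv_inv, mul_assoc, inv_mul_cancel, mul_one]
    simp only [Equiv.subLeft_apply, e3]
    rw [show (1 : F) - (1 - u) = u from by ring, e2, map_mul]
    ring
  have hdouble :
      (∑ u : F, ∑ v : F, B u * B' v * (B⁻¹ * C) (1 - u) * (B'⁻¹ * C') (1 - v) *
        A⁻¹ (1 - u * x - v * y))
      = A⁻¹ (1 - x) * ∑ u : F, ∑ v : F, (B⁻¹ * C) u * B' v * ((B⁻¹ * C)⁻¹ * C) (1 - u) *
          (B'⁻¹ * C') (1 - v) * A⁻¹ (1 - u * (-x / (1 - x)) - v * (y / (1 - x))) := by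
    rw [Finset.sum_comm]
    simp only [hsum]
    rw [← Finset.mul_sum, Finset.sum_comm]
  rw [hdouble]
  have hε : (1 : MulChar F ℂ) (x * y) = (1 : MulChar F ℂ) (-x / (1 - x) * (y / (1 - x))) := by
    rcases eq_or_ne x 0 with rfl | hx0
    · simp
    rcases eq_or_ne y 0 with rfl | hy0
    · simp
    rw [MulChar.one_apply (isUnit_iff_ne_zero.mpr (mul_ne_zero hx0 hy0)),
        MulChar.one_apply]
    exact isUnit_iff_ne_zero.mpr (mul_ne_zero (div_ne_zero (neg_ne_zero.mpr hx0) h1x)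
      (div_ne_zero hy0 h1x))
  have hB : B⁻¹ (-1) = B (-1) := by
    rw [MulChar.inv_apply']; norm_num
  have hkey : ((B⁻¹ * C) * B' * C * C') (-1) = C (-1) * ((B * B' * C * C') (-1)) := by
    simp only [MulChar.mul_apply, hB]; ring
  rw [← hε, hkey]
  have hC : C (-1) * C (-1) = 1 := by rw [← map_mul]; simp
  generalize (∑ u : F, ∑ v : F,
      (B⁻¹ * C) u * B' v * ((B⁻¹ * C)⁻¹ * C) (1 - u) * (B'⁻¹ * C') (1 - v) *
        A⁻¹ (1 - u * (-x / (1 - x)) - v * (y / (1 - x)))) = S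
  linear_combination (-((1 : MulChar F ℂ) (x * y) * (B * B' * C * C') (-1) *
    A⁻¹ (1 - x) * S)) * hC
end

section
/- Let A, B, B', C, C' be complex-valued multiplicative characters of a finite field F_q and let x, y ∈ F_q with y ≠ 1. Then F₂(A;B,B';C,C';x,y) = C'(-1)·Ā(1-y)·F₂(A; B, B̄'C'; C, C'; x/(1-y), -y/(1-y)). -/
open Finset

/-- transformation of F₂, second form, `y ≠ 1`. -/
theorem appellF2_transformation_y {F : Type*} [Field F] [Fintype F]
    (A B B' C C' : MulChar F ℂ) (x y : F) (hy : y ≠ 1) :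
    appellF2 A B B' C C' x y =
      C' (-1) * A⁻¹ (1 - y) *
        appellF2 A B (B'⁻¹ * C') C C' (x / (1 - y)) (-y / (1 - y)) := by
  have ht : (1 : F) - y ≠ 0 := sub_ne_zero.mpr (Ne.symm hy)
  have hB' : (B'⁻¹ * C')⁻¹ * C' = B' := by
    rw [mul_inv, inv_inv, inv_mul_cancel_right]
  have hinv : ∀ χ : MulChar F ℂ, χ⁻¹ (-1 : F) = χ (-1) := fun χ => by
    rw [MulChar.inv_apply']; norm_num
  have hsq : C' (-1 : F) * C' (-1) = 1 := by rw [← map_mul]; norm_num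
  simp only [appellF2, hB']
  have hε : (1 : MulChar F ℂ) (x / (1 - y) * (-y / (1 - y))) = (1 : MulChar F ℂ) (x * y) := by
    have harg : x / (1 - y) * (-y / (1 - y)) = (x * y) * (-(((1 - y) * (1 - y))⁻¹)) := by
      field_simp
      try ring
    have hne : (-(((1 - y) * (1 - y))⁻¹) : F) ≠ 0 := by simp [ht]
    have hiff : IsUnit (x * y * (-(((1 - y) * (1 - y))⁻¹))) ↔ IsUnit (x * y) := by
      simp only [isUnit_iff_ne_zero, mul_ne_zero_iff]
      refine ⟨fun h => h.1, fun h => ⟨h, hne⟩⟩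
    by_cases h : IsUnit (x * y)
    · rw [harg, MulChar.one_apply (hiff.mpr h), MulChar.one_apply h]
    · rw [harg, MulChar.map_nonunit _ (mt hiff.mp h), MulChar.map_nonunit _ h]
  rw [hε]
  have hsum : ∀ u : F,
      (∑ v : F, B u * B' v * (B⁻¹ * C) (1 - u) * (B'⁻¹ * C') (1 - v) * A⁻¹ (1 - u * x - v * y))
      = ∑ v : F, A⁻¹ (1 - y) *
          (B u * (B'⁻¹ * C') v * (B⁻¹ * C) (1 - u) * B' (1 - v) *
            A⁻¹ (1 - u * (x / (1 - y)) - v * (-y / (1 - y)))) := by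
    intro u
    apply Fintype.sum_equiv (Equiv.subLeft (1 : F))
    intro v
    have hA : A⁻¹ (1 - u * x - v * y)
        = A⁻¹ (1 - y) *
          A⁻¹ (1 - u * (x / (1 - y)) - (1 - v) * (-y / (1 - y))) := by
      rw [← map_mul]
      congr 1
      field_simp
      ring
    simp only [Equiv.subLeft_apply]
    rw [show (1 : F) - (1 - v) = v from by ring, hA]
    ring
  simp only [hsum, ← Finset.mul_sum]
  have hsgn : (B * B' * C * C') (-1 : F) = C' (-1) * (B * (B'⁻¹ * C') * C * C') (-1) := by
    simp only [MulChar.mul_apply, hinv B']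
    linear_combination (-(B (-1 : F) * B' (-1) * C (-1) * C' (-1))) * hsq
  rw [hsgn]; ring
end

section
/- Let A, B, B', C, C' be complex-valued multiplicative characters of a finite field F_q and let x, y ∈ F_q with x + y ≠ 1. Then F₂(A;B,B';C,C';x,y) = (CC')(-1)·Ā(1-x-y)·F₂(A; B̄C, B̄'C'; C, C'; -x/(1-x-y), -y/(1-x-y)). -/
open Finset

/-- transformation of F₂, third form, `x + y ≠ 1`. -/
theorem appellF2_transformation_xy {F : Type*} [Field F] [Fintype F]
    (A B B' C C' : MulChar F ℂ) (x y : F) (hxy : x + y ≠ 1) :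
    appellF2 A B B' C C' x y =
      (C * C') (-1) * A⁻¹ (1 - x - y) *
        appellF2 A (B⁻¹ * C) (B'⁻¹ * C') C C'
          (-x / (1 - x - y)) (-y / (1 - x - y)) := by
  set t := (1:F) - x - y with hthe
  have ht : t ≠ 0 := fun h => hxy (by rw [hthe] at h; linear_combination -h)
  have hsq : ∀ χ : MulChar F ℂ, χ ((-1:F)) * χ (-1) = 1 := fun χ => by
    rw [← map_mul]; norm_num
  have hone : ∀ z : F, z ≠ 0 → (1 : MulChar F ℂ) z = 1 := fun z hz =>
    MulChar.one_apply hz.isUnit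
  have hBC : (B⁻¹ * C)⁻¹ * C = B := by
    rw [mul_inv_rev, inv_inv, mul_comm C⁻¹ B, mul_assoc, inv_mul_cancel, mul_one]
  have hBC' : (B'⁻¹ * C')⁻¹ * C' = B' := by
    rw [mul_inv_rev, inv_inv, mul_comm C'⁻¹ B', mul_assoc, inv_mul_cancel, mul_one]
  have hε : (1 : MulChar F ℂ) (-x / t * (-y / t)) = (1 : MulChar F ℂ) (x * y) := by
    have h1 : -x / t * (-y / t) = (x * y) * (t * t)⁻¹ := by field_simp
    rw [h1, map_mul, hone _ (inv_ne_zero (mul_ne_zero ht ht)), mul_one]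
  have hconst : (C * C') ((-1:F)) * ((B⁻¹ * C) * (B'⁻¹ * C') * C * C') (-1)
      = (B * B' * C * C') (-1) := by
    simp only [MulChar.mul_apply, MulChar.inv_apply', inv_neg, inv_one]
    linear_combination (B (-1) * B' (-1) * C (-1) * C' (-1) * C' (-1) * C' (-1)) * hsq C
      + (B (-1) * B' (-1) * C (-1) * C' (-1)) * hsq C'
  have key : (∑ u : F, ∑ v : F,
        B u * B' v * (B⁻¹ * C) (1 - u) * (B'⁻¹ * C') (1 - v) * A⁻¹ (1 - u * x - v * y))
      = A⁻¹ t * ∑ u : F, ∑ v : F,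
        (B⁻¹ * C) u * (B'⁻¹ * C') v * B (1 - u) * B' (1 - v) *
          A⁻¹ (1 - u * (-x / t) - v * (-y / t)) := by
    rw [Finset.mul_sum]
    refine Fintype.sum_equiv (Equiv.subLeft (1:F)) _ _ fun u => ?_
    rw [Finset.mul_sum]
    refine Fintype.sum_equiv (Equiv.subLeft (1:F)) _ _ fun v => ?_
    simp only [Equiv.subLeft_apply]
    have e1 : (1:F) - (1 - u) = u := by ring
    have e2 : (1:F) - (1 - v) = v := by ring
    rw [e1, e2]
    have hA : A⁻¹ t * A⁻¹ (1 - (1 - u) * (-x / t) - (1 - v) * (-y / t))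
        = A⁻¹ (1 - u * x - v * y) := by
      rw [← map_mul]; congr 1; field_simp; ring
    rw [← hA]; ring
  unfold appellF2
  simp only [hBC, hBC']
  rw [key, hε, ← hconst]
  ring
end

section
/- Let A, B, B', C, C' be complex-valued multiplicative characters of a finite field F_q with q elements, let x, y ∈ F_q with y ≠ 1, and let t ∈ F_q with t ≠ 1. Then (1/(q-1))·Σ_θ {B'C̄'θ choose θ}·F₂(A;B,B'θ;C,C';x,y)·θ(t) = ε(t)·B̄'(1-t)·F₂(A;B,B';C,C'; x, y/(1-t)) - (B̄'C')(-t)·ε(y)·Ā(1-y)·₂F₁(A,B;C | x/(1-y)), where the sum on the left runs over all multiplicative characters θ of F_q. -/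
open Finset

/-!
Expanding `{B'C̄'θ choose θ}` and `F₂(A; B, B'θ; C, C'; x, y)` as character sums, the dependence
on `θ` collects into `θ(s v t / ((1 - s)(1 - v)))`, so orthogonality of characters collapses the
sum over `θ`. What remains in the variable `v` of `F₂` is the binomial theorem
`(q - 1)⁻¹ ∑_θ {Ēθ choose θ} θ(-a) = E(1 + a)` for `a ≠ 0`, with `E = B̄'C'` and
`a = v t / (1 - v)`: it replaces the weight `E(1 - v)` of `F₂` by `E(1 - v + v t)` for `v ≠ 1`, and by `0` for `v = 1`.
The substitution `v ↦ v (1 - t)` identifies the full sum over `v` with `F₂` at `y / (1 - t)`, and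
the missing term `v = 1` is the `₂F₁` term.
-/

theorem mul_mul_inv_one_sub_eq_one_iff {F : Type*} [Field F] {a s : F} (ha : a ≠ 0) :
    s * a * (1 - s)⁻¹ = 1 ↔ s * (1 + a) = 1 := by
  rcases eq_or_ne s 1 with rfl | hs
  · simp [ha]
  · rw [mul_inv_eq_one₀ (sub_ne_zero.2 hs.symm)]
    constructor <;> intro h <;> linear_combination h

namespace MulChar

variable {F : Type*} [Field F] [Fintype F]

theorem sum_apply_eq_zero {a : F} (ha : a ≠ 1) : ∑ χ : MulChar F ℂ, χ a = 0 := by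
  obtain ⟨χ, hχ⟩ := exists_apply_ne_one_of_hasEnoughRootsOfUnity F ℂ ha
  refine eq_zero_of_mul_eq_self_left hχ ?_
  simp only [Finset.mul_sum, ← MulChar.mul_apply]
  exact Fintype.sum_bijective _ (Group.mulLeft_bijective χ) _ _ fun χ' ↦ rfl

theorem card_eq_card_sub_one : (Fintype.card (MulChar F ℂ) : ℂ) = Fintype.card F - 1 := by
  have h := card_eq_card_units_of_hasEnoughRootsOfUnity F ℂ
  rw [Nat.card_eq_fintype_card, Nat.card_units, Nat.card_eq_fintype_card] at h
  rw [h, Nat.cast_sub Fintype.card_pos, Nat.cast_one]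

theorem inv_card_sub_one_mul_sum_apply [DecidableEq F] (a : F) :
    ((Fintype.card F : ℂ) - 1)⁻¹ * ∑ χ : MulChar F ℂ, χ a = if a = 1 then 1 else 0 := by
  split_ifs with ha
  · simp only [ha, map_one, sum_const, card_univ, nsmul_eq_mul, mul_one, ← card_eq_card_sub_one]
    exact inv_mul_cancel₀ (Nat.cast_ne_zero.2 Fintype.card_ne_zero)
  · rw [sum_apply_eq_zero ha, mul_zero]

theorem sum_apply_mul_ite_mul_eq_one [DecidableEq F] (χ : MulChar F ℂ) (b : F) :
    ∑ s : F, χ s * (if s * b = 1 then 1 else 0) = χ⁻¹ b := by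
  rcases eq_or_ne b 0 with rfl | hb
  · simp
  · simp_rw [mul_eq_one_iff_eq_inv₀ hb, mul_ite, mul_one, mul_zero, sum_ite_eq', mem_univ,
      if_true, inv_apply']

end MulChar

section

variable {F : Type*} [Field F] [Fintype F]

theorem inv_card_sub_one_mul_sum_binom_mul_apply_neg (E : MulChar F ℂ) {a : F} (ha : a ≠ 0) :
    ((Fintype.card F : ℂ) - 1)⁻¹ * ∑ θ : MulChar F ℂ, binom (E⁻¹ * θ) θ * θ (-a) =
      E (1 + a) := by
  classical
  have hterm : ∀ θ : MulChar F ℂ,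
      binom (E⁻¹ * θ) θ * θ (-a) = ∑ s : F, E⁻¹ s * θ (s * a * (1 - s)⁻¹) := by
    intro θ
    simp only [binom, mul_sum, sum_mul]
    refine sum_congr rfl fun s _ ↦ ?_
    rw [show s * a * (1 - s)⁻¹ = -1 * -a * s * (1 - s)⁻¹ by ring, map_mul, map_mul, map_mul,
      MulChar.mul_apply, MulChar.inv_apply' θ]
    ring
  rw [sum_congr rfl fun θ _ ↦ hterm θ, sum_comm, mul_sum]
  calc ∑ s : F, ((Fintype.card F : ℂ) - 1)⁻¹ *
          ∑ θ : MulChar F ℂ, E⁻¹ s * θ (s * a * (1 - s)⁻¹)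
      = ∑ s : F, E⁻¹ s * if s * (1 + a) = 1 then 1 else 0 := by
        refine sum_congr rfl fun s _ ↦ ?_
        rw [← mul_sum, mul_left_comm, MulChar.inv_card_sub_one_mul_sum_apply,
          mul_mul_inv_one_sub_eq_one_iff ha]
    _ = E (1 + a) := by rw [MulChar.sum_apply_mul_ite_mul_eq_one, inv_inv]


theorem apply_mul_inv_card_sub_one_mul_sum_binom_mul_apply_one_sub [DecidableEq F]
    (B' E : MulChar F ℂ) {t : F} (ht : t ≠ 0) (v : F) :
    B' v * (((Fintype.card F : ℂ) - 1)⁻¹ *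
        ∑ θ : MulChar F ℂ,
          binom (E⁻¹ * θ) θ * ((E * θ⁻¹) (1 - v) * θ (-1) * θ v * θ t)) =
      B' v * E (1 - v + v * t) - if v = 1 then E t else 0 := by
  rcases eq_or_ne v 0 with rfl | hv0
  · simp [MulChar.map_zero]
  rcases eq_or_ne v 1 with rfl | hv1
  · simp [MulChar.map_zero]
  have h1v : 1 - v ≠ 0 := sub_ne_zero.2 hv1.symm
  have hθ : ∀ θ : MulChar F ℂ,
      (E * θ⁻¹) (1 - v) * θ (-1) * θ v * θ t = E (1 - v) * θ (-(v * t / (1 - v))) := by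
    intro θ
    rw [show -(v * t / (1 - v)) = (1 - v)⁻¹ * -1 * v * t by ring, map_mul, map_mul, map_mul,
      MulChar.mul_apply, MulChar.inv_apply' θ]
    ring
  simp_rw [hθ, mul_left_comm _ (E (1 - v)), ← mul_sum]
  rw [mul_left_comm _ (E (1 - v)), inv_card_sub_one_mul_sum_binom_mul_apply_neg E
    (div_ne_zero (mul_ne_zero hv0 ht) h1v), ← map_mul, if_neg hv1, sub_zero]
  congr 2
  field_simp

/- For `v y ≠ 1`, `ε(x) (BC)(-1)` times this is `Ā(1 - v y) · ₂F₁(A, B; C | x / (1 - v y))`;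
the slice at `v = 1` gives the `₂F₁` term of the theorem. -/
noncomputable def appellF2Slice (A B C : MulChar F ℂ) (x y v : F) : ℂ :=
  ∑ u : F, B u * (B⁻¹ * C) (1 - u) * A⁻¹ (1 - u * x - v * y)

theorem appellF2_eq_sum_slice (A B B' C C' : MulChar F ℂ) (x y : F) :
    appellF2 A B B' C C' x y = (1 : MulChar F ℂ) (x * y) * (B * B' * C * C') (-1) *
      ∑ v : F, B' v * (B'⁻¹ * C') (1 - v) * appellF2Slice A B C x y v := by
  rw [appellF2, sum_comm]
  simp only [appellF2Slice, mul_sum]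
  exact sum_congr rfl fun v _ ↦ sum_congr rfl fun u _ ↦ by ring

theorem appellF2Slice_div (A B C : MulChar F ℂ) (x y v : F) {c : F} (hc : c ≠ 0) :
    appellF2Slice A B C x (y / c) (v * c) = appellF2Slice A B C x y v := by
  rw [appellF2Slice, appellF2Slice, show v * c * (y / c) = v * y by field_simp]

theorem sum_mul_appellF2_mul_apply (β : MulChar F ℂ → ℂ) (A B B' C C' : MulChar F ℂ)
    (x y t : F) :
    ∑ θ : MulChar F ℂ, β θ * appellF2 A B (B' * θ) C C' x y * θ t =
      (1 : MulChar F ℂ) (x * y) * (B * B' * C * C') (-1) *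
        ∑ v : F, B' v * (∑ θ : MulChar F ℂ,
          β θ * ((B'⁻¹ * C' * θ⁻¹) (1 - v) * θ (-1) * θ v * θ t)) *
            appellF2Slice A B C x y v := by
  have hchar : ∀ θ : MulChar F ℂ, (B' * θ)⁻¹ * C' = B'⁻¹ * C' * θ⁻¹ := fun θ ↦ by
    rw [mul_inv, mul_right_comm]
  simp_rw [appellF2_eq_sum_slice, hchar]
  simp only [mul_sum, sum_mul]
  rw [sum_comm]
  refine sum_congr rfl fun v _ ↦ sum_congr rfl fun θ _ ↦ ?_
  simp only [MulChar.mul_apply]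
  ring

theorem one_apply_mul_inv_apply_mul_appellF2_div_one_sub (A B B' C C' : MulChar F ℂ) (x y : F)
    {t : F} (ht0 : t ≠ 0) (ht1 : t ≠ 1) :
    (1 : MulChar F ℂ) t * B'⁻¹ (1 - t) * appellF2 A B B' C C' x (y / (1 - t)) =
      (1 : MulChar F ℂ) (x * y) * (B * B' * C * C') (-1) *
        ∑ v : F, B' v * (B'⁻¹ * C') (1 - v + v * t) * appellF2Slice A B C x y v := by
  have h1t : 1 - t ≠ 0 := sub_ne_zero.2 ht1.symm
  have hε : (1 : MulChar F ℂ) (x * (y / (1 - t))) = (1 : MulChar F ℂ) (x * y) := by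
    rw [mul_div_assoc', div_eq_mul_inv, map_mul, MulChar.one_apply (inv_ne_zero h1t).isUnit,
      mul_one]
  have hsubst : ∑ v : F, B' v * (B'⁻¹ * C') (1 - v) * appellF2Slice A B C x (y / (1 - t)) v =
      B' (1 - t) *
        ∑ v : F, B' v * (B'⁻¹ * C') (1 - v + v * t) * appellF2Slice A B C x y v := by
    rw [mul_sum, ← Equiv.sum_comp (Equiv.mulRight₀ (1 - t) h1t)]
    refine sum_congr rfl fun v _ ↦ ?_
    rw [Equiv.mulRight₀_apply, appellF2Slice_div _ _ _ _ _ _ h1t, map_mul,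
      show 1 - v * (1 - t) = 1 - v + v * t by ring]
    ring
  rw [appellF2_eq_sum_slice, hε, hsubst, MulChar.one_apply ht0.isUnit,
    MulChar.inv_apply_eq_inv']
  field_simp [MulChar.apply_ne_zero_iff.2 h1t.isUnit]

theorem one_apply_mul_inv_apply_mul_gauss2F1_div_one_sub (A B C : MulChar F ℂ) (x : F) {y : F}
    (hy : y ≠ 1) :
    (1 : MulChar F ℂ) y * A⁻¹ (1 - y) * gauss2F1 A B C (x / (1 - y)) =
      (1 : MulChar F ℂ) (x * y) * (B * C) (-1) * appellF2Slice A B C x y 1 := by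
  have h1y : 1 - y ≠ 0 := sub_ne_zero.2 hy.symm
  have hε : (1 : MulChar F ℂ) y * (1 : MulChar F ℂ) (x / (1 - y)) =
      (1 : MulChar F ℂ) (x * y) := by
    rw [← map_mul, mul_div_assoc', div_eq_mul_inv, map_mul,
      MulChar.one_apply (inv_ne_zero h1y).isUnit, mul_one, mul_comm]
  rw [gauss2F1, appellF2Slice]
  simp only [mul_sum]
  refine sum_congr rfl fun u _ ↦ ?_
  rw [show (1 : F) - u * x - 1 * y = (1 - y) * (1 - x / (1 - y) * u) by field_simp; ring,
    map_mul A⁻¹, ← hε]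
  ring

end

/-- a generating function for F₂ in the parameter `B'`. -/
theorem appellF2_generating_Bprime {F : Type*} [Field F] [Fintype F]
    (A B B' C C' : MulChar F ℂ) (x y t : F) (hy : y ≠ 1) (ht : t ≠ 1) :
    ((Fintype.card F : ℂ) - 1)⁻¹ *
        ∑ θ : MulChar F ℂ,
          binom (B' * C'⁻¹ * θ) θ * appellF2 A B (B' * θ) C C' x y * θ t =
      (1 : MulChar F ℂ) t * B'⁻¹ (1 - t) * appellF2 A B B' C C' x (y / (1 - t)) -
      (B'⁻¹ * C') (-t) * (1 : MulChar F ℂ) y * A⁻¹ (1 - y) *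
        gauss2F1 A B C (x / (1 - y)) := by
  classical
  rcases eq_or_ne t 0 with rfl | ht0
  · simp [MulChar.map_zero]
  set E := B'⁻¹ * C'
  set c := (1 : MulChar F ℂ) (x * y) * (B * B' * C * C') (-1)
  have hsign : E (-t) * ((1 : MulChar F ℂ) (x * y) * (B * C) (-1)) = c * E t := by
    rw [neg_eq_neg_one_mul, map_mul]
    simp only [c, E, MulChar.mul_apply, MulChar.inv_apply' B' (-1), inv_neg_one]
    ring
  calc _ = c * ∑ v : F, (B' v * E (1 - v + v * t) - if v = 1 then E t else 0) *
        appellF2Slice A B C x y v := by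
        rw [show B' * C'⁻¹ = E⁻¹ by rw [mul_inv, inv_inv], sum_mul_appellF2_mul_apply,
          mul_left_comm, mul_sum]
        refine congrArg _ (sum_congr rfl fun v _ ↦ ?_)
        rw [← apply_mul_inv_card_sub_one_mul_sum_binom_mul_apply_one_sub B' E ht0 v]
        ring
    _ = _ := by
        rw [one_apply_mul_inv_apply_mul_appellF2_div_one_sub A B B' C C' x y ht0 ht,
          mul_assoc (E (-t)), mul_assoc (E (-t)),
          one_apply_mul_inv_apply_mul_gauss2F1_div_one_sub A B C x hy, ← mul_assoc, hsign]
        simp only [sub_mul, ite_mul, zero_mul, sum_sub_distrib, sum_ite_eq', mem_univ, if_true,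
          mul_sub]
        ring
end
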